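/- Let d ≥ 2, fix j ∈ {1,…,d−1} and i ∈ {1,…,j}, let r0 = rd = 1 and r1,…,r_{d−1} be positive integers, let r'_i be a rational non-integer number with r'_i ≤ n/6, and let n, r, l be positive integers and ε ∈ (0,1) satisfying: n > max{400, Σ_{k=1}^{d−1} r_{k−1}·r_k}, r ≤ Σ_{k=1}^{d−1} r_{k−1}·r_k, and l > max{63·log(n/ε) + 9·log(2r/ε) + 18, 6·⌈r'_i⌉}. Consider n − ⌊r'_i⌋ columns of the j-th unfolding of a random sampling pattern: for each column, the set of observed positions is the image of l independent draws, each uniformly distributed over the column's n^j cells {1,…,n}^j, with draws independent across columns. Then with probability at least 1 − ε/r, for every nonempty proper subset T of these n − ⌊r'_i⌋ columns, the number of distinct values of the i-th coordinate appearing among the observed positions of the columns in T is at least |T| + ⌈r'_i⌉. -/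

import Mathlib

/-!
Union bound. Put `G = ⌈q⌉ - 1`. If a nonempty proper set `T` of `t` columns sees at most `t + G`
values of the `i`-th coordinate, all `l t` draws in `T` land in one set `S` of `t + G` values,
which for fixed `T, S` has probability `((t + G) / n) ^ (l t)`. Each of the `m - 1` sizes `t`
contributes at most `C(m, t) C(n, t + G) ((t + G) / n) ^ (l t) ≤ ε / (2 r n)`. When
`2 (t + G) ≤ n`, use `C(n, s) ≤ (e n / s) ^ s` and `l t ≥ 6 (t + G)`; otherwise `u = n - t - G`
is the small parameter: both binomials are at most `n ^ u`, and since `t > n / 3`,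
`(1 - u / n) ^ (l t) ≤ exp (-l u / 3)`.
-/

open Finset Real

section Estimates

/-- `C(m, t)` choices of `t` columns, `C(n, t + G)` choices of a value set `S`, and the
probability that all `l * t` draws in those columns hit `S`. -/
noncomputable def badTerm (n m G l t : ℕ) : ℝ :=
  m.choose t * n.choose (t + G) * ((t + G) / n) ^ (l * t)

theorem choose_le_exp_mul_div_pow (n : ℕ) {s : ℕ} (hs : 0 < s) :
    (n.choose s : ℝ) ≤ (exp 1 * n / s) ^ s := by
  have hs' : (0 : ℝ) < s := by exact_mod_cast hs
  calc (n.choose s : ℝ) ≤ n ^ s / s.factorial := Nat.choose_le_pow_div s n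
    _ = (n / s) ^ s * (s ^ s / s.factorial) := by
        rw [← mul_div_assoc, ← mul_pow, div_mul_cancel₀ _ hs'.ne']
    _ ≤ (n / s) ^ s * exp s := by gcongr; exact pow_div_factorial_le_exp _ hs'.le s
    _ = (exp 1 * n / s) ^ s := by rw [← exp_one_pow, ← mul_pow]; ring

theorem log_choose_le_mul_log {m n k : ℕ} (hmn : m ≤ n) (hkm : k ≤ m) :
    log (m.choose k) ≤ k * log n := by
  rw [← log_pow]
  exact log_le_log (by exact_mod_cast Nat.choose_pos hkm)
    (by exact_mod_cast (Nat.choose_le_pow m k).trans (Nat.pow_le_pow_left hmn k))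

variable {n m G l t : ℕ} {B : ℝ}

theorem log_badTerm_le_of_two_mul_le (hB : 0 ≤ B) (hl : 63 * log n + 9 * B + 18 < l)
    (hGl : 6 * (G + 1) ≤ l) (ht : 1 ≤ t) (htm : t ≤ m) (hmn : m ≤ n)
    (hsn : 2 * (t + G) ≤ n) :
    log (badTerm n m G l t) ≤ -B - log n := by
  have hs : (0 : ℝ) < t + G := by positivity
  have hn : (0 : ℝ) < n := by norm_cast; omega
  have hlogn : 0 ≤ log n := log_natCast_nonneg n
  set D := log (n / (t + G))
  have hD : 1 / 2 ≤ D := by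
    have h2 : (2 : ℝ) ≤ n / (t + G) := by rw [le_div_iff₀ hs]; exact_mod_cast hsn
    linarith [log_le_log two_pos h2, log_two_gt_d9]
  have hpos₁ : (0 : ℝ) < m.choose t := by exact_mod_cast Nat.choose_pos htm
  have hpos₂ : (0 : ℝ) < n.choose (t + G) := by exact_mod_cast Nat.choose_pos (by omega)
  have hchoose₁ := log_choose_le_mul_log hmn htm
  have hchoose₂ : log (n.choose (t + G)) ≤ (t + G) * (1 + D) := by
    have h := choose_le_exp_mul_div_pow n (s := t + G) (by omega)
    push_cast at h
    calc log (n.choose (t + G)) ≤ log ((exp 1 * n / (t + G)) ^ (t + G)) := log_le_log hpos₂ h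
      _ = (t + G) * (1 + D) := by
        rw [log_pow, mul_div_assoc, log_mul (exp_pos 1).ne' (by positivity), log_exp]
        push_cast; ring
  have hratio : log ((t + G) / n) = -D := by rw [← log_inv, inv_div]
  have hlt : 6 * ((t : ℝ) + G) ≤ l * t := by
    have : 6 * (t + G) ≤ l * t := by nlinarith
    exact_mod_cast this
  have hl_t : (63 * log n + 9 * B + 18) * t ≤ l * t :=
    mul_le_mul_of_nonneg_right hl.le (Nat.cast_nonneg t)
  have ht' : (1 : ℝ) ≤ t := by exact_mod_cast ht
  have hsD : ((t : ℝ) + G) * (1 + D) ≤ l * t / 6 * (1 + D) :=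
    mul_le_mul_of_nonneg_right (by linarith) (by linarith)
  have hXD : (l * t : ℝ) / 2 ≤ l * t * D := by
    have : (0 : ℝ) ≤ l * t := by positivity
    nlinarith
  unfold badTerm
  rw [log_mul (by positivity) (by positivity), log_mul hpos₁.ne' hpos₂.ne', log_pow, hratio]
  push_cast
  linarith [mul_le_mul_of_nonneg_left ht' hlogn, mul_le_mul_of_nonneg_left ht' hB]

theorem log_badTerm_le_of_lt_two_mul (hB : 0 ≤ B) (hl : 63 * log n + 9 * B + 18 < l)
    (ht : 1 ≤ t) (htm : t < m) (hmn : m + G ≤ n) (hGn : 6 * G ≤ n) (hsn : n < 2 * (t + G)) :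
    log (badTerm n m G l t) ≤ -B - log n := by
  obtain ⟨u, hu⟩ : ∃ u, n = t + G + u := ⟨n - (t + G), by omega⟩
  have hu1 : 1 ≤ u := by omega
  have hn : (0 : ℝ) < n := by norm_cast; omega
  have hlogn : 0 ≤ log n := log_natCast_nonneg n
  have hpos₁ : (0 : ℝ) < m.choose t := by exact_mod_cast Nat.choose_pos htm.le
  have hpos₂ : (0 : ℝ) < n.choose (t + G) := by exact_mod_cast Nat.choose_pos (by omega)
  have hchoose₁ : log (m.choose t) ≤ u * log n := by
    rw [← Nat.choose_symm htm.le]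
    exact (log_choose_le_mul_log (by omega) (Nat.sub_le m t)).trans
      (mul_le_mul_of_nonneg_right (by exact_mod_cast (by omega : m - t ≤ u)) hlogn)
  have hchoose₂ : log (n.choose (t + G)) ≤ u * log n := by
    rw [← Nat.choose_symm (by omega), show n - (t + G) = u by omega]
    exact log_choose_le_mul_log le_rfl (by omega)
  have hnR : (n : ℝ) = t + G + u := by exact_mod_cast hu
  have hratio : log ((t + G) / n) ≤ -(u / n) := by
    have := log_le_sub_one_of_pos (x := (t + G) / n) (by positivity)
    rw [hnR] at this ⊢
    field_simp at this ⊢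
    linarith
  have h3t : (n : ℝ) < 3 * t := by
    have : n < 3 * t := by omega
    exact_mod_cast this
  have hdecay : (l * t : ℝ) * log ((t + G) / n) ≤ -(l * u / 3) := by
    have hthird : (l * u / 3 : ℝ) ≤ l * t * (u / n) := by
      rw [mul_div_assoc', le_div_iff₀ hn]
      have : (0 : ℝ) ≤ l * u := by positivity
      nlinarith
    linarith [mul_le_mul_of_nonneg_left hratio (by positivity : (0 : ℝ) ≤ l * t)]
  unfold badTerm
  rw [log_mul (by positivity) (by positivity), log_mul hpos₁.ne' hpos₂.ne', log_pow]
  push_cast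
  have hu' : (1 : ℝ) ≤ u := by exact_mod_cast hu1
  have := mul_le_mul_of_nonneg_right hu' (by linarith : (0 : ℝ) ≤ l / 3 - 2 * log n)
  linarith

theorem badTerm_le (hB : 0 ≤ B) (hl : 63 * log n + 9 * B + 18 < l) (hGl : 6 * (G + 1) ≤ l)
    (hGn : 6 * G ≤ n) (hmn : m + G ≤ n) (ht : t ∈ Icc 1 (m - 1)) :
    badTerm n m G l t ≤ exp (-B) / n := by
  obtain ⟨ht1, htm⟩ := mem_Icc.1 ht
  have hn : (0 : ℝ) < n := by norm_cast; omega
  have hpos : 0 < badTerm n m G l t := by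
    unfold badTerm
    have := Nat.choose_pos (n := m) (k := t) (by omega)
    have := Nat.choose_pos (n := n) (k := t + G) (by omega)
    positivity
  rw [← log_le_log_iff hpos (by positivity), log_div (exp_pos _).ne' hn.ne', log_exp]
  rcases le_or_gt (2 * (t + G)) n with hsn | hsn
  · exact log_badTerm_le_of_two_mul_le hB hl hGl ht1 (by omega) (by omega) hsn
  · exact log_badTerm_le_of_lt_two_mul hB hl ht1 (by omega) hmn hGn hsn

theorem sum_badTerm_le (hn : 0 < n) (hB : 0 ≤ B) (hl : 63 * log n + 9 * B + 18 < l)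
    (hGl : 6 * (G + 1) ≤ l) (hGn : 6 * G ≤ n) (hmn : m + G ≤ n) :
    ∑ t ∈ Icc 1 (m - 1), badTerm n m G l t ≤ exp (-B) := by
  have hn' : (n : ℝ) ≠ 0 := by positivity
  calc ∑ t ∈ Icc 1 (m - 1), badTerm n m G l t ≤ ∑ t ∈ Icc 1 (m - 1), exp (-B) / n :=
        sum_le_sum fun t ht => badTerm_le hB hl hGl hGn hmn ht
    _ = (m - 1 : ℕ) * (exp (-B) / n) := by simp
    _ ≤ n * (exp (-B) / n) := by gcongr; omega
    _ = exp (-B) := mul_div_cancel₀ _ hn'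

end Estimates

section Sampling

variable {ι κ V α : Type*} [Fintype κ] [Fintype α] [DecidableEq α]

/-- The paper's `mᵢ` is the cardinality of this set for `f = fun v => v i`. -/
def observedValues [DecidableEq V] (f : V → α) (ω : ι → κ → V) (T : Finset ι) : Finset α :=
  (T.biUnion fun c => univ.image (ω c)).image f

theorem exists_forall_mem_of_card_observedValues_le [DecidableEq V] {f : V → α}
    {ω : ι → κ → V} {T : Finset ι} {s : ℕ} (hs : s ≤ Fintype.card α)
    (h : #(observedValues f ω T) ≤ s) :
    ∃ S ∈ powersetCard s (univ : Finset α), ∀ c ∈ T, ∀ k, f (ω c k) ∈ S := by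
  obtain ⟨S, hsub, -, hcard⟩ :=
    exists_subsuperset_card_eq (subset_univ (observedValues f ω T)) h (by simpa using hs)
  refine ⟨S, mem_powersetCard.2 ⟨subset_univ _, hcard⟩, fun c hc k => hsub ?_⟩
  exact mem_image_of_mem f (mem_biUnion.2 ⟨c, hc, mem_image_of_mem _ (mem_univ k)⟩)

variable [Fintype ι] [DecidableEq ι] [DecidableEq κ] [Fintype V]

theorem card_filter_apply_mem (i₀ : ι) (S : Finset α) :
    #{v : ι → α | v i₀ ∈ S} = #S * Fintype.card α ^ (Fintype.card ι - 1) := by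
  have : ({v : ι → α | v i₀ ∈ S} : Finset _) =
      Fintype.piFinset (Function.update (fun _ => univ) i₀ S) := by
    ext v
    simp only [mem_filter, mem_univ, true_and, Fintype.mem_piFinset]
    rw [Function.forall_update_iff (p := fun a s => v a ∈ s)]
    simp
  rw [this, Fintype.card_piFinset]
  simp_rw [Function.apply_update (fun _ => card)]
  rw [prod_update_of_mem (mem_univ _), prod_const, card_sdiff_of_subset (subset_univ _)]
  simp

theorem card_filter_apply_mem_div [Nonempty α] (i₀ : ι) (S : Finset α) :
    (#{v : ι → α | v i₀ ∈ S} : ℝ) / Fintype.card (ι → α) = #S / Fintype.card α := by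
  obtain ⟨k, hk⟩ := Nat.exists_eq_add_one_of_ne_zero (Fintype.card_pos_iff.2 ⟨i₀⟩).ne'
  have : (Fintype.card α : ℝ) ≠ 0 := by positivity
  rw [card_filter_apply_mem, Fintype.card_fun, hk, Nat.add_sub_cancel]
  push_cast
  field_simp
  ring

theorem card_filter_forall_forall (T : Finset ι) (P : V → Prop) [DecidablePred P] :
    #{ω : ι → κ → V | ∀ c ∈ T, ∀ k, P (ω c k)} =
      #{v | P v} ^ (Fintype.card κ * #T) *
        Fintype.card V ^ (Fintype.card κ * (Fintype.card ι - #T)) := by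
  have : ({ω : ι → κ → V | ∀ c ∈ T, ∀ k, P (ω c k)} : Finset _) =
      Fintype.piFinset fun c => if c ∈ T then Fintype.piFinset fun _ => {v | P v} else univ := by
    ext ω
    simp only [mem_filter, mem_univ, true_and, Fintype.mem_piFinset]
    refine forall_congr' fun c => ?_
    split_ifs with hc <;> simp [hc]
  rw [this, Fintype.card_piFinset]
  simp_rw [apply_ite card]
  rw [prod_ite, filter_univ_mem, prod_const, prod_const,
    filter_not, filter_univ_mem, card_sdiff_of_subset (subset_univ _)]
  simp [pow_mul]

theorem card_filter_forall_forall_div [Nonempty V] (T : Finset ι) (P : V → Prop)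
    [DecidablePred P] :
    (#{ω : ι → κ → V | ∀ c ∈ T, ∀ k, P (ω c k)} : ℝ) / Fintype.card (ι → κ → V) =
      (#{v | P v} / Fintype.card V) ^ (Fintype.card κ * #T) := by
  have hT : #T ≤ Fintype.card ι := card_le_univ T
  have : (Fintype.card V : ℝ) ≠ 0 := by positivity
  rw [card_filter_forall_forall, Fintype.card_fun, Fintype.card_fun, ← pow_mul,
    ← Nat.add_sub_of_le hT, mul_add, pow_add, Nat.add_sub_cancel_left]
  push_cast
  rw [div_pow]
  field_simp

theorem card_filter_exists_card_observedValues_le [DecidableEq V] (f : V → α) (G : ℕ)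
    (hG : Fintype.card ι - 1 + G ≤ Fintype.card α) :
    #{ω : ι → κ → V | ∃ T : Finset ι, T.Nonempty ∧ T ≠ univ ∧
        #(observedValues f ω T) ≤ #T + G} ≤
      ∑ t ∈ Icc 1 (Fintype.card ι - 1), ∑ T ∈ powersetCard t (univ : Finset ι),
        ∑ S ∈ powersetCard (t + G) (univ : Finset α),
          #{ω : ι → κ → V | ∀ c ∈ T, ∀ k, f (ω c k) ∈ S} := by
  calc _ ≤ #((Icc 1 (Fintype.card ι - 1)).biUnion fun t =>
          (powersetCard t univ).biUnion fun T => (powersetCard (t + G) univ).biUnion fun S =>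
            ({ω : ι → κ → V | ∀ c ∈ T, ∀ k, f (ω c k) ∈ S} : Finset _)) := by
        refine card_le_card fun ω hω => ?_
        obtain ⟨T, hT, hTu, hTω⟩ := (mem_filter.1 hω).2
        have hTι : #T < Fintype.card ι := (card_lt_iff_ne_univ T).2 hTu
        obtain ⟨S, hS, hωS⟩ := exists_forall_mem_of_card_observedValues_le (by omega) hTω
        simp only [mem_biUnion, mem_Icc, mem_powersetCard, mem_filter, mem_univ, true_and]
        exact ⟨#T, ⟨hT.card_pos, by omega⟩, T, ⟨subset_univ _, rfl⟩, S,
          mem_powersetCard.1 hS, hωS⟩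
    _ ≤ _ := card_biUnion_le.trans <| sum_le_sum fun t _ =>
        card_biUnion_le.trans <| sum_le_sum fun T _ => card_biUnion_le

theorem card_filter_exists_card_observedValues_le_div {ι' : Type*} [Fintype ι']
    [DecidableEq ι'] [Nonempty α] (i₀ : ι') (G : ℕ) (hG : Fintype.card ι - 1 + G ≤ Fintype.card α) :
    (#{ω : ι → κ → ι' → α | ∃ T : Finset ι, T.Nonempty ∧ T ≠ univ ∧
        #(observedValues (fun v => v i₀) ω T) ≤ #T + G} : ℝ) /
        Fintype.card (ι → κ → ι' → α) ≤
      ∑ t ∈ Icc 1 (Fintype.card ι - 1),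
        badTerm (Fintype.card α) (Fintype.card ι) G (Fintype.card κ) t := by
  have hterm : ∀ t, ∀ T ∈ powersetCard t (univ : Finset ι),
      ∀ S ∈ powersetCard (t + G) (univ : Finset α),
      (#{ω : ι → κ → ι' → α | ∀ c ∈ T, ∀ k, ω c k i₀ ∈ S} : ℝ) /
        Fintype.card (ι → κ → ι' → α) = ((t + G) / Fintype.card α) ^ (Fintype.card κ * t) := by
    intro t T hT S hS
    rw [card_filter_forall_forall_div (P := fun v : ι' → α => v i₀ ∈ S),
      card_filter_apply_mem_div, (mem_powersetCard.1 hT).2, (mem_powersetCard.1 hS).2, Nat.cast_add]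
  calc _ ≤ (∑ t ∈ Icc 1 (Fintype.card ι - 1), ∑ T ∈ powersetCard t (univ : Finset ι),
        ∑ S ∈ powersetCard (t + G) (univ : Finset α),
          #{ω : ι → κ → ι' → α | ∀ c ∈ T, ∀ k, ω c k i₀ ∈ S} : ℕ) /
        (Fintype.card (ι → κ → ι' → α) : ℝ) := by
        gcongr
        exact card_filter_exists_card_observedValues_le _ G hG
    _ = _ := by
        push_cast
        simp_rw [sum_div]
        refine sum_congr rfl fun t _ => ?_
        rw [sum_congr rfl fun T hT => sum_congr rfl fun S hS => hterm t T hT S hS]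
        simp only [sum_const, card_powersetCard, card_univ, nsmul_eq_mul, badTerm]
        ring

theorem one_sub_sum_badTerm_le_card_div {ι' : Type*} [Fintype ι'] [DecidableEq ι']
    [Nonempty α] (i₀ : ι') (c : ℤ) (G : ℕ) (hcG : c ≤ G + 1)
    (hG : Fintype.card ι - 1 + G ≤ Fintype.card α) :
    1 - ∑ t ∈ Icc 1 (Fintype.card ι - 1),
        badTerm (Fintype.card α) (Fintype.card ι) G (Fintype.card κ) t ≤
      (Nat.card {ω : ι → κ → ι' → α // ∀ T : Finset ι, T.Nonempty → T ≠ univ →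
          (#T : ℤ) + c ≤ #(observedValues (fun v => v i₀) ω T)} : ℝ) /
        Fintype.card (ι → κ → ι' → α) := by
  classical
  set bad : (ι → κ → ι' → α) → Prop := fun ω => ∃ T : Finset ι, T.Nonempty ∧ T ≠ univ ∧
    #(observedValues (fun v => v i₀) ω T) ≤ #T + G
  have hgood : ∀ ω, ¬ bad ω → ∀ T : Finset ι, T.Nonempty → T ≠ univ →
      (#T : ℤ) + c ≤ #(observedValues (fun v => v i₀) ω T) := by
    intro ω hω T hT hTu
    have : #T + G < #(observedValues (fun v => v i₀) ω T) := by
      by_contra h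
      exact hω ⟨T, hT, hTu, not_lt.1 h⟩
    omega
  have hcount : (Fintype.card (ι → κ → ι' → α) : ℝ) - #{ω | bad ω} ≤
      Nat.card {ω : ι → κ → ι' → α // ∀ T : Finset ι, T.Nonempty → T ≠ univ →
        (#T : ℤ) + c ≤ #(observedValues (fun v => v i₀) ω T)} := by
    rw [Nat.card_eq_fintype_card, Fintype.card_subtype, ← card_univ,
      ← card_filter_add_card_filter_not bad]
    push_cast
    have := card_le_card (monotone_filter_right univ fun ω (_ : ω ∈ univ) => hgood ω)
    linarith [(Nat.cast_le (α := ℝ)).2 this]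
  have hpos : (0 : ℝ) < Fintype.card (ι → κ → ι' → α) := by exact_mod_cast Fintype.card_pos
  calc _ ≤ 1 - (#{ω | bad ω} : ℝ) / Fintype.card (ι → κ → ι' → α) := by
        linarith [card_filter_exists_card_observedValues_le_div (κ := κ) i₀ G hG]
    _ = ((Fintype.card (ι → κ → ι' → α) : ℝ) - #{ω | bad ω}) /
        Fintype.card (ι → κ → ι' → α) := by field_simp
    _ ≤ _ := by gcongr

end Sampling

theorem one_sub_exp_neg_le_card_div {m n l j G : ℕ} {B : ℝ} (i₀ : Fin j) (c : ℤ)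
    (hn : 0 < n) (hB : 0 ≤ B) (hl : 63 * log n + 9 * B + 18 < l) (hGl : 6 * (G + 1) ≤ l)
    (hGn : 6 * G ≤ n) (hmn : m + G ≤ n) (hcG : c ≤ G + 1) :
    1 - exp (-B) ≤
      (Nat.card {ω : Fin m → Fin l → Fin j → Fin n // ∀ T : Finset (Fin m), T.Nonempty →
          T ≠ univ → (#T : ℤ) + c ≤ #(observedValues (fun v => v i₀) ω T)} : ℝ) /
        Fintype.card (Fin m → Fin l → Fin j → Fin n) := by
  have : Nonempty (Fin n) := ⟨⟨0, hn⟩⟩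
  have key := one_sub_sum_badTerm_le_card_div (ι := Fin m) (κ := Fin l) (α := Fin n) i₀ c G hcG
    (by simp only [Fintype.card_fin]; omega)
  simp only [Fintype.card_fin] at key
  linarith [sum_badTerm_le hn hB hl hGl hGn hmn]

theorem toNat_ceil_sub_one_le_toNat_floor (q : ℚ) : (⌈q⌉ - 1).toNat ≤ (⌊q⌋).toNat := by
  have := Int.ceil_le_floor_add_one q
  omega

theorem six_mul_toNat_ceil_sub_one_le {q : ℚ} {n : ℕ} (hqn : (q : ℝ) ≤ n / 6) :
    6 * (⌈q⌉ - 1).toNat ≤ n := by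
  have hq : ((⌈q⌉ : ℚ) : ℝ) < q + 1 := by exact_mod_cast Int.ceil_lt_add_one q
  push_cast at hq
  have : 6 * (⌈q⌉ - 1) < n := by exact_mod_cast (by linarith : (6 * (⌈q⌉ - 1) : ℝ) < n)
  omega

theorem six_mul_toNat_ceil_sub_one_add_one_le {q : ℚ} {l : ℕ} (hql : 6 * (⌈q⌉ : ℝ) < l)
    (hl : 6 ≤ l) : 6 * ((⌈q⌉ - 1).toNat + 1) ≤ l := by
  have : 6 * ⌈q⌉ < l := by exact_mod_cast hql
  omega

theorem stmt14 (j i : ℕ)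
    (hi1 : 1 ≤ i) (hij : i ≤ j)
    (q : ℚ)
    (n r l : ℕ) (hn0 : 0 < n) (hr0 : 0 < r)
    (ε : ℝ) (hε0 : 0 < ε) (hε1 : ε < 1)
    (hqn : (q : ℝ) ≤ (n : ℝ) / 6)
    (hlb : (l : ℝ) >
      max (63 * Real.log (n / ε) + 9 * Real.log (2 * r / ε) + 18) (6 * (⌈q⌉ : ℝ))) :
    1 - ε / r ≤
      (Nat.card {ω : Fin (n - (⌊q⌋).toNat) → Fin l → (Fin j → Fin n) //
          ∀ T : Finset (Fin (n - (⌊q⌋).toNat)), T.Nonempty → T ≠ Finset.univ →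
            (T.card : ℤ) + ⌈q⌉ ≤
              (((T.biUnion fun c => Finset.univ.image (ω c)).image
                (fun v => v ⟨i - 1, by omega⟩)).card : ℤ)} : ℝ) /
        (Fintype.card (Fin (n - (⌊q⌋).toNat) → Fin l → (Fin j → Fin n)) : ℝ) := by
  obtain ⟨hlog, hceil⟩ := max_lt_iff.1 hlb
  have hr : (1 : ℝ) ≤ r := by exact_mod_cast hr0
  have hB : 0 ≤ log (2 * r / ε) := log_nonneg (by rw [le_div_iff₀ hε0]; linarith)
  have hlogn : log n ≤ log (n / ε) :=
    log_le_log (by positivity) (le_div_self (by positivity) hε0 hε1.le)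
  have h6l : 6 ≤ l := by
    have : (6 : ℝ) ≤ l := by linarith [log_natCast_nonneg n]
    exact_mod_cast this
  have hGF := toNat_ceil_sub_one_le_toNat_floor q
  have hGn := six_mul_toNat_ceil_sub_one_le hqn
  have hcG : ⌈q⌉ ≤ (⌈q⌉ - 1).toNat + 1 := by linarith [Int.self_le_toNat (⌈q⌉ - 1)]
  refine le_trans ?_ (one_sub_exp_neg_le_card_div ⟨i - 1, by omega⟩ ⌈q⌉ hn0 hB (by linarith)
    (six_mul_toNat_ceil_sub_one_add_one_le hceil h6l) hGn (by omega) hcG)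
  rw [exp_neg, exp_log (by positivity), inv_div]
  gcongr
  linarith
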